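/- Let r and a be coprime integers with r > a ≥ 1. Then in both types of three-dimensional toric flips φ: X ⇢ X^+ given by the White–Frumkin classification — type (i): a·e_1 + (r−a)·e_2 = r·e_3 + e_4, where X has one cyclic quotient singular point of type (1/r)(a, −a, 1) and X^+ has two cyclic quotient singular points of types (1/(r−a))(a, 1, −a) and (1/a)(1, r, −r); and type (ii): a·e_1 + e_2 = r·e_3 + e_4, where X has one cyclic quotient singular point of type (1/r)(a, −a, 1) and X^+ has one of type (1/a)(1, r, −r) — one has F(X) > F(X^+); equivalently, r − 1/r > ((r−a) − 1/(r−a)) + (a − 1/a) when a < r, and r − 1/r > a − 1/a. -/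

import Mathlib

/-! The contribution `x ↦ x - 1/x` of a point of index `x` to the fictitious number is strictly
increasing and strictly superadditive on the positive reals; type (ii) is monotonicity at `a < r`,
type (i) is superadditivity at `r = (r - a) + a`. -/

section FictitiousContribution

variable {K : Type*} [Field K] [LinearOrder K] [IsStrictOrderedRing K]

theorem sub_one_div_lt_sub_one_div {x y : K} (hx : 0 < x) (hxy : x < y) :
    x - 1 / x < y - 1 / y := by
  have : 1 / y < 1 / x := one_div_lt_one_div_of_lt hx hxy
  linarith

theorem sub_one_div_add_sub_one_div_lt {x y : K} (hx : 0 < x) (hy : 0 < y) :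
    (x - 1 / x) + (y - 1 / y) < (x + y) - 1 / (x + y) := by
  have hsum : 1 / (x + y) < 1 / y := one_div_lt_one_div_of_lt hy (lt_add_of_pos_left y hx)
  have hx' : 0 < 1 / x := one_div_pos.mpr hx
  linarith

end FictitiousContribution

theorem toric_flip_fictitious_number_decreases_general (r a : ℕ)
    (ha : 1 ≤ a) (har : a < r) :
    -- type (i): `F(X) = r - 1/r > ((r-a) - 1/(r-a)) + (a - 1/a) = F(X⁺)`
    ((((r : ℚ) - (a : ℚ)) - 1 / ((r : ℚ) - (a : ℚ))) +
        ((a : ℚ) - 1 / (a : ℚ)) < (r : ℚ) - 1 / (r : ℚ)) ∧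
    -- type (ii): `F(X) = r - 1/r > a - 1/a = F(X⁺)`
    ((a : ℚ) - 1 / (a : ℚ) < (r : ℚ) - 1 / (r : ℚ)) := by
  have ha' : (0 : ℚ) < a := by exact_mod_cast ha
  have har' : (a : ℚ) < r := by exact_mod_cast har
  refine ⟨?_, sub_one_div_lt_sub_one_div ha' har'⟩
  simpa using sub_one_div_add_sub_one_div_lt (sub_pos.mpr har') ha'

/-- Example on toric flips. Let `r` and `a` be coprime
integers with `r > a ≥ 1`. Then in both types of three-dimensional toric flips
`φ : X ⇢ X⁺` given by the White–Frumkin classification — type (i):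
`a·e₁ + (r-a)·e₂ = r·e₃ + e₄`, where `X` has one cyclic quotient singular point
of type `(1/r)(a,-a,1)` and `X⁺` has two cyclic quotient singular points of
types `(1/(r-a))(a,1,-a)` and `(1/a)(1,r,-r)`; and type (ii):
`a·e₁ + e₂ = r·e₃ + e₄`, where `X` has one cyclic quotient singular point of
type `(1/r)(a,-a,1)` and `X⁺` has one of type `(1/a)(1,r,-r)` — one has
`F(X) > F(X⁺)`; equivalently,
`r - 1/r > ((r-a) - 1/(r-a)) + (a - 1/a)` (type (i), when `a < r`), and
`r - 1/r > a - 1/a` (type (ii)). -/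
theorem toric_flip_fictitious_number_decreases (r a : ℕ)
    (ha : 1 ≤ a) (har : a < r) (hcop : Nat.Coprime r a) :
    -- type (i): `F(X) = r - 1/r > ((r-a) - 1/(r-a)) + (a - 1/a) = F(X⁺)`
    ((((r : ℚ) - (a : ℚ)) - 1 / ((r : ℚ) - (a : ℚ))) +
        ((a : ℚ) - 1 / (a : ℚ)) < (r : ℚ) - 1 / (r : ℚ)) ∧
    -- type (ii): `F(X) = r - 1/r > a - 1/a = F(X⁺)`
    ((a : ℚ) - 1 / (a : ℚ) < (r : ℚ) - 1 / (r : ℚ)) :=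
  toric_flip_fictitious_number_decreases_general r a ha har
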